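/- If A is an almost even Hermitian matrix over ℤπ and P is any square matrix over ℤπ, then P·A·conj(P)ᵗ is almost even. In particular, any matrix congruent to an almost even Hermitian matrix is almost even. -/

import Mathlib

/-- The integral group ring ℤπ. -/
abbrev GroupRing (π : Type) [Group π] := MonoidAlgebra ℤ π

/-- The involution on ℤπ induced by g ↦ g⁻¹, extended ℤ-linearly. -/
noncomputable def GRconj {π : Type} [Group π] (x : GroupRing π) : GroupRing π :=
  MonoidAlgebra.ofCoeff (Finsupp.mapDomain (fun g : π => g⁻¹) x.coeff)

/-- Entrywise involution followed by transpose: the conjugate-transpose of a matrix over ℤπ. -/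
noncomputable def ctrans {π : Type} [Group π] {m n : Type} (A : Matrix m n (GroupRing π)) :
    Matrix n m (GroupRing π) :=
  (A.map GRconj).transpose

/-- A square matrix over ℤπ is Hermitian if conj(A)ᵗ = A. -/
def IsHermitianGR {π : Type} [Group π] {n : Type} (A : Matrix n n (GroupRing π)) : Prop :=
  ctrans A = A


/-- A matrix over ℤπ is almost even if for every g ∈ π with g² = 1 and g ≠ 1, the coefficient
of g in every diagonal entry is even. -/
def AlmostEven {π : Type} [Group π] {n : ℕ} (A : Matrix (Fin n) (Fin n) (GroupRing π)) : Prop :=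
  ∀ (i : Fin n) (g : π), g ^ 2 = 1 → g ≠ 1 → Even ((A i i).coeff g)

/-! The diagonal entry `(P A P*)ᵢᵢ` is the Hermitian form `v A v*` at the `i`-th row `v` of `P`.
Up to the cross term `b + b̄`, this form is additive in `v`, and the coefficient of `b + b̄` at an
involution `g = g⁻¹` is `2 b_g`. So it suffices to treat monomial vectors `v = c u eⱼ`, for which
`v A v* = c² u Aⱼⱼ u⁻¹`: conjugation by `u` permutes the nontrivial involutions of `π`. -/

section

variable {π : Type} [Group π]

lemma coeff_GRconj (x : GroupRing π) (g : π) : (GRconj x).coeff g = x.coeff g⁻¹ := by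
  simpa [GRconj] using Finsupp.mapDomain_apply inv_injective x.coeff g⁻¹

@[simp]
lemma GRconj_zero : GRconj (0 : GroupRing π) = 0 := by
  ext g; simp [coeff_GRconj]

lemma GRconj_add (x y : GroupRing π) : GRconj (x + y) = GRconj x + GRconj y := by
  ext g; simp [coeff_GRconj]

lemma GRconj_sum {ι : Type*} (s : Finset ι) (f : ι → GroupRing π) :
    GRconj (∑ i ∈ s, f i) = ∑ i ∈ s, GRconj (f i) :=
  map_sum (AddMonoidHom.mk' GRconj GRconj_add) f s

lemma GRconj_single (u : π) (c : ℤ) :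
    GRconj (MonoidAlgebra.single u c) = MonoidAlgebra.single u⁻¹ c := by
  simp [GRconj, MonoidAlgebra.coeff_single]

@[simp]
lemma GRconj_GRconj (x : GroupRing π) : GRconj (GRconj x) = x := by
  ext g; rw [coeff_GRconj, coeff_GRconj, inv_inv]

lemma GRconj_mul (x y : GroupRing π) : GRconj (x * y) = GRconj y * GRconj x := by
  induction x using MonoidAlgebra.induction_linear with
  | zero => simp
  | add x x' hx hx' => rw [add_mul, GRconj_add, hx, hx', GRconj_add, mul_add]
  | single u c =>
    induction y using MonoidAlgebra.induction_linear with
    | zero => simp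
    | add y y' hy hy' => rw [mul_add, GRconj_add, hy, hy', GRconj_add, add_mul]
    | single v d =>
      simp only [MonoidAlgebra.single_mul_single, GRconj_single, mul_inv_rev, mul_comm c d]

def EvenAtInvolutions (x : GroupRing π) : Prop :=
  ∀ g : π, g ^ 2 = 1 → g ≠ 1 → Even (x.coeff g)

lemma EvenAtInvolutions.add {x y : GroupRing π} (hx : EvenAtInvolutions x)
    (hy : EvenAtInvolutions y) : EvenAtInvolutions (x + y) :=
  fun g hg hg1 => by simpa using (hx g hg hg1).add (hy g hg hg1)

lemma evenAtInvolutions_add_GRconj (x : GroupRing π) : EvenAtInvolutions (x + GRconj x) := by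
  intro g hg _
  have hinv : g⁻¹ = g := inv_eq_of_mul_eq_one_right (by rwa [← pow_two])
  simp only [MonoidAlgebra.coeff_add, Finsupp.add_apply, coeff_GRconj, hinv]
  exact ⟨x.coeff g, rfl⟩

lemma EvenAtInvolutions.single_mul_mul_single {a : GroupRing π} (ha : EvenAtInvolutions a)
    (u : π) (c : ℤ) :
    EvenAtInvolutions (MonoidAlgebra.single u c * a * MonoidAlgebra.single u⁻¹ c) := by
  intro g hg hg1
  rw [MonoidAlgebra.coeff_mul_single_apply, MonoidAlgebra.coeff_single_mul_apply, inv_inv]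
  refine ((ha _ ?_ ?_).mul_left c).mul_right c
  · simpa [← mul_assoc, hg] using conj_pow (a := u⁻¹) (b := g) (i := 2)
  · simpa [← mul_assoc] using (conj_eq_one_iff (a := u⁻¹)).not.mpr hg1

section HermitianForm

variable {ι : Type} [Fintype ι]

noncomputable def hermForm (A : Matrix ι ι (GroupRing π)) (v w : ι → GroupRing π) : GroupRing π :=
  ∑ j, ∑ k, v j * A j k * GRconj (w k)

variable (A : Matrix ι ι (GroupRing π))

lemma hermForm_add_left (v v' w : ι → GroupRing π) :
    hermForm A (v + v') w = hermForm A v w + hermForm A v' w := by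
  simp only [hermForm, Pi.add_apply, add_mul, Finset.sum_add_distrib]

lemma hermForm_add_right (v w w' : ι → GroupRing π) :
    hermForm A v (w + w') = hermForm A v w + hermForm A v w' := by
  simp only [hermForm, Pi.add_apply, GRconj_add, mul_add, Finset.sum_add_distrib]

lemma GRconj_hermForm (hA : IsHermitianGR A) (v w : ι → GroupRing π) :
    GRconj (hermForm A v w) = hermForm A w v := by
  have hAc : ∀ j k, GRconj (A j k) = A k j := fun j k => congrFun₂ hA k j
  simp only [hermForm, GRconj_sum, GRconj_mul, GRconj_GRconj, hAc, mul_assoc]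
  exact Finset.sum_comm

lemma hermForm_add_add (hA : IsHermitianGR A) (v w : ι → GroupRing π) :
    hermForm A (v + w) (v + w)
      = hermForm A v v + hermForm A w w + (hermForm A v w + GRconj (hermForm A v w)) := by
  rw [GRconj_hermForm A hA, hermForm_add_left, hermForm_add_right, hermForm_add_right]
  abel

lemma hermForm_single [DecidableEq ι] (j : ι) (x : GroupRing π) :
    hermForm A (Pi.single j x) (Pi.single j x) = x * A j j * GRconj x := by
  simp [hermForm, Pi.single_apply, apply_ite GRconj]

lemma mul_mul_ctrans_apply_self (P : Matrix ι ι (GroupRing π)) (i : ι) :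
    (P * A * ctrans P) i i = hermForm A (P i) (P i) := by
  simp only [hermForm, Matrix.mul_apply, ctrans, Matrix.transpose_apply, Matrix.map_apply,
    Finset.sum_mul]
  exact Finset.sum_comm

variable {A}

lemma EvenAtInvolutions.hermForm_add (hA : IsHermitianGR A) {v w : ι → GroupRing π}
    (hv : EvenAtInvolutions (hermForm A v v)) (hw : EvenAtInvolutions (hermForm A w w)) :
    EvenAtInvolutions (hermForm A (v + w) (v + w)) := by
  rw [hermForm_add_add A hA]
  exact (hv.add hw).add (evenAtInvolutions_add_GRconj _)

theorem evenAtInvolutions_hermForm (hA : IsHermitianGR A)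
    (hAE : ∀ j, EvenAtInvolutions (A j j)) (v : ι → GroupRing π) :
    EvenAtInvolutions (hermForm A v v) := by
  classical
  induction v using Pi.single_induction with
  | zero => simp [hermForm, EvenAtInvolutions]
  | add v w hv hw => exact hv.hermForm_add hA hw
  | single j x =>
    induction x using MonoidAlgebra.induction_linear with
    | zero => simp [hermForm, EvenAtInvolutions]
    | add x y hx hy => simpa only [Pi.single_add] using hx.hermForm_add hA hy
    | single u c =>
      simpa [hermForm_single, GRconj_single] using (hAE j).single_mul_mul_single u c

end HermitianForm

end

/-- If A is almost even Hermitian, so is P·A·conj(P)ᵗ for any P; in particular any matrix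
congruent to an almost even Hermitian matrix is almost even. -/
theorem almostEven_congruence (π : Type) [Group π] (n : ℕ)
    (A P : Matrix (Fin n) (Fin n) (GroupRing π))
    (hA : IsHermitianGR A) (hAE : AlmostEven A) :
    AlmostEven (P * A * ctrans P) := by
  intro i
  rw [mul_mul_ctrans_apply_self]
  exact evenAtInvolutions_hermForm hA hAE (P i)
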